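/- Variance equals the expected excess log-partition value (Theorem 1, variance identity): let (Ω, 𝔽, μ) be a probability space, θ* : B → ℝ a fixed parameter with Gibbs distribution P_{θ*}, and Θ̂ : Ω → (B → ℝ) a measurable random parameter such that Θ̂(s) is integrable with ∫ Θ̂(ω)(s) dμ(ω) = θ*(s) for every s ∈ B (unbiasedness) and ω ↦ ψ(Θ̂(ω)) is integrable. Then ∫ D_KL(P_{θ*}, P_{Θ̂(ω)}) dμ(ω) = ∫ ψ(Θ̂(ω)) dμ(ω) − ψ(θ*), where D_KL(P_{θ₁}, P_{θ₂}) = Σ_{x ∈ S} p(x;θ₁) log(p(x;θ₁)/p(x;θ₂)). -/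
import Mathlib


open Finset

/-- ζ(s,x) = 1 if s ⊆ x and 0 otherwise. -/
noncomputable def zeta {V : Type*} [DecidableEq V] (s x : Finset V) : ℝ :=
  if s ⊆ x then 1 else 0

/-- The log-partition function ψ(θ) = log Σ_{x ∈ S} exp(Σ_{s ∈ B} ζ(s,x) θ(s)). -/
noncomputable def psi {V : Type*} [DecidableEq V] (S B : Finset (Finset V))
    (θ : Finset V → ℝ) : ℝ :=
  Real.log (∑ x ∈ S, Real.exp (∑ s ∈ B, zeta s x * θ s))

/-- The Gibbs probability p(x;θ) = exp(Σ_{s ∈ B} ζ(s,x) θ(s) − ψ(θ)). -/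
noncomputable def gibbs {V : Type*} [DecidableEq V] (S B : Finset (Finset V))
    (θ : Finset V → ℝ) (x : Finset V) : ℝ :=
  Real.exp (∑ s ∈ B, zeta s x * θ s - psi S B θ)

/-- The expectation parameter η(y;θ) = Σ_{x ∈ S} ζ(y,x) p(x;θ). -/
noncomputable def eta {V : Type*} [DecidableEq V] (S B : Finset (Finset V))
    (θ : Finset V → ℝ) (y : Finset V) : ℝ :=
  ∑ x ∈ S, zeta y x * gibbs S B θ x
/-- The Kullback–Leibler divergence between two distributions on S. -/
noncomputable def klDiv {V : Type*} [DecidableEq V] (S : Finset (Finset V))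
    (u v : Finset V → ℝ) : ℝ :=
  ∑ x ∈ S, u x * Real.log (u x / v x)

lemma gibbs_sum_one {V : Type*} [DecidableEq V] (S B : Finset (Finset V)) (hS : S.Nonempty)
    (θ : Finset V → ℝ) : ∑ x ∈ S, gibbs S B θ x = 1 := by
  have hZ : 0 < ∑ x ∈ S, Real.exp (∑ s ∈ B, zeta s x * θ s) :=
    Finset.sum_pos (fun x _ => Real.exp_pos _) hS
  simp only [gibbs, Real.exp_sub, psi, Real.exp_log hZ]
  rw [← Finset.sum_div, div_self hZ.ne']

lemma klDiv_gibbs {V : Type*} [DecidableEq V] (S B : Finset (Finset V)) (hS : S.Nonempty)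
    (θ1 θ2 : Finset V → ℝ) :
    klDiv S (gibbs S B θ1) (gibbs S B θ2)
      = psi S B θ2 - psi S B θ1 + ∑ s ∈ B, eta S B θ1 s * (θ1 s - θ2 s) := by
  have key : ∀ x ∈ S, gibbs S B θ1 x * Real.log (gibbs S B θ1 x / gibbs S B θ2 x)
      = gibbs S B θ1 x * (psi S B θ2 - psi S B θ1)
        + ∑ s ∈ B, zeta s x * (θ1 s - θ2 s) * gibbs S B θ1 x := by
    intro x _
    rw [gibbs, gibbs, ← Real.exp_sub, Real.log_exp, ← gibbs]
    have h : (∑ s ∈ B, zeta s x * θ1 s - psi S B θ1 - (∑ s ∈ B, zeta s x * θ2 s - psi S B θ2))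
        = (psi S B θ2 - psi S B θ1) + ∑ s ∈ B, zeta s x * (θ1 s - θ2 s) := by
      simp only [mul_sub, Finset.sum_sub_distrib]; ring
    rw [h, mul_add, Finset.mul_sum]
    congr 1
    apply Finset.sum_congr rfl; intro s _; ring
  rw [klDiv, Finset.sum_congr rfl key, Finset.sum_add_distrib, ← Finset.sum_mul,
    gibbs_sum_one S B hS, one_mul, Finset.sum_comm]
  congr 1
  apply Finset.sum_congr rfl; intro s _
  rw [eta, Finset.sum_mul]
  apply Finset.sum_congr rfl; intro x _; ring

open MeasureTheory in
/-- Variance identity of Theorem 1: for an unbiased measurable random parameter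
Θ̂ (E[Θ̂(s)] = θ*(s) for all s ∈ B), the expected KL divergence from P_{θ*} to
P_{Θ̂} equals E[ψ(Θ̂)] − ψ(θ*). -/
theorem variance_eq_expected_excess_psi {V : Type*} [Fintype V] [DecidableEq V]
    (S B : Finset (Finset V)) (hS : S.Nonempty)
    (θs : Finset V → ℝ)
    {Ω : Type*} [MeasurableSpace Ω] (μ : Measure Ω) [IsProbabilityMeasure μ]
    (Θ : Ω → Finset V → ℝ) (hmeas : Measurable Θ)
    (hunbInt : ∀ s ∈ B, Integrable (fun ω => Θ ω s) μ)
    (hunb : ∀ s ∈ B, ∫ ω, Θ ω s ∂μ = θs s)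
    (hintψ : Integrable (fun ω => psi S B (Θ ω)) μ) :
    ∫ ω, klDiv S (gibbs S B θs) (gibbs S B (Θ ω)) ∂μ
      = (∫ ω, psi S B (Θ ω) ∂μ) - psi S B θs := by
  have hrw : ∀ ω, klDiv S (gibbs S B θs) (gibbs S B (Θ ω))
      = (psi S B (Θ ω) - psi S B θs) + ∑ s ∈ B, eta S B θs s * (θs s - Θ ω s) := by
    intro ω
    rw [klDiv_gibbs S B hS θs (Θ ω)]
  simp only [hrw]
  have hint2 : ∀ s ∈ B, Integrable (fun ω => eta S B θs s * (θs s - Θ ω s)) μ := fun s hs =>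
    (((integrable_const (θs s)).sub (hunbInt s hs)).const_mul _)
  have hintsum : Integrable (fun ω => ∑ s ∈ B, eta S B θs s * (θs s - Θ ω s)) μ :=
    integrable_finset_sum _ hint2
  rw [integral_add (f := fun ω => psi S B (Θ ω) - psi S B θs)
        (hintψ.sub (integrable_const _)) hintsum,
      integral_sub hintψ (integrable_const _), integral_const,
      integral_finset_sum _ hint2]
  have hz : ∀ s ∈ B, ∫ ω, eta S B θs s * (θs s - Θ ω s) ∂μ = 0 := by
    intro s hs
    rw [MeasureTheory.integral_const_mul, integral_sub (integrable_const _) (hunbInt s hs), integral_const,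
      hunb s hs]
    simp
  rw [Finset.sum_congr rfl hz]
  simp
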